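/- Let x in R^d with x · 1_d != 0, and consider kernel regression with the two-layer bias-free CNTK-GAP kernel K on training data {(x, +1), (-x, -1)}, assuming the 2x2 kernel matrix H_K is invertible. Then the interpolant g_K satisfies: either g_K(z) >= 0 iff z · 1_d >= 0 (when x · 1_d > 0), or g_K(z) >= 0 iff z · 1_d <= 0 (when x · 1_d < 0). In either case z · 1_d = 0 is the decision boundary. -/
import Mathlib


open Matrix

/-- Euclidean norm of a vector. -/
noncomputable def nrm {q : ℕ} (x : Fin q → ℝ) : ℝ := Real.sqrt (x ⬝ᵥ x)

/-- Angle between two vectors. -/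
noncomputable def angle {q : ℕ} (z x : Fin q → ℝ) : ℝ :=
  Real.arccos ((z ⬝ᵥ x) / (nrm z * nrm x))

/-- The NTK of a bias-free two-layer ReLU fully connected network. -/
noncomputable def ntk {q : ℕ} (z x : Fin q → ℝ) : ℝ :=
  (1 / Real.pi) *
    (2 * (z ⬝ᵥ x) * (Real.pi - angle z x) + nrm z * nrm x * Real.sin (angle z x))

/-- The `i`-th cyclic patch of length `q` of a vector `x ∈ ℝ^d`. -/
def patch {d : ℕ} (hd : 0 < d) (q : ℕ) (x : Fin d → ℝ) (i : Fin d) : Fin q → ℝ :=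
  fun t => x ⟨((i : ℕ) + (t : ℕ)) % d, Nat.mod_lt _ hd⟩

/-- The two-layer bias-free CNTK with global average pooling. -/
noncomputable def cntk {d : ℕ} (hd : 0 < d) (q : ℕ) (z x : Fin d → ℝ) : ℝ :=
  (1 / (d : ℝ) ^ 2) * ∑ i : Fin d, ∑ j : Fin d, ntk (patch hd q z i) (patch hd q x j)

/-- The 2×2 CNTK kernel matrix on the training points `{x, −x}`. -/
noncomputable def Hcntk {d : ℕ} (hd : 0 < d) (q : ℕ) (x : Fin d → ℝ) :
    Matrix (Fin 2) (Fin 2) ℝ :=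
  !![cntk hd q x x, cntk hd q x (-x); cntk hd q (-x) x, cntk hd q (-x) (-x)]

/-- The CNTK-GAP kernel regression interpolant with training data `{(x,+1), (−x,−1)}`. -/
noncomputable def gK {d : ℕ} (hd : 0 < d) (q : ℕ) (x z : Fin d → ℝ) : ℝ :=
  (Matrix.vecMul ![cntk hd q z x, cntk hd q z (-x)] (Hcntk hd q x)⁻¹) ⬝ᵥ ![1, -1]


lemma nrm_neg {q : ℕ} (x : Fin q → ℝ) : nrm (-x) = nrm x := by simp [nrm]

lemma angle_neg_right {q : ℕ} (z x : Fin q → ℝ) :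
    angle z (-x) = Real.pi - angle z x := by
  rw [angle, angle, nrm_neg, dotProduct_neg, neg_div, Real.arccos_neg]

lemma ntk_sub {q : ℕ} (z x : Fin q → ℝ) : ntk z x - ntk z (-x) = 2 * (z ⬝ᵥ x) := by
  rw [ntk, ntk, angle_neg_right, nrm_neg, dotProduct_neg, Real.sin_pi_sub]
  field_simp
  ring

lemma ntk_comm {q : ℕ} (z x : Fin q → ℝ) : ntk z x = ntk x z := by
  rw [ntk, ntk, angle, angle, dotProduct_comm, mul_comm (nrm z) (nrm x)]

lemma ntk_neg_neg {q : ℕ} (z x : Fin q → ℝ) : ntk (-z) (-x) = ntk z x := by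
  rw [ntk, ntk, angle, angle, nrm_neg, nrm_neg, neg_dotProduct, dotProduct_neg, neg_neg]

lemma patch_neg {d : ℕ} (hd : 0 < d) (q : ℕ) (x : Fin d → ℝ) (i : Fin d) :
    patch hd q (-x) i = -(patch hd q x i) := by
  funext t; simp [patch]

lemma sum_shift {d : ℕ} (hd : 0 < d) (z : Fin d → ℝ) (t : ℕ) :
    ∑ i : Fin d, z ⟨((i : ℕ) + t) % d, Nat.mod_lt _ hd⟩ = ∑ i : Fin d, z i := by
  apply Fintype.sum_bijective (fun i : Fin d => (⟨((i : ℕ) + t) % d, Nat.mod_lt _ hd⟩ : Fin d))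
  · rw [← Finite.injective_iff_bijective]
    intro i j hij
    have h : ((i : ℕ) + t) % d = ((j : ℕ) + t) % d := by
      simpa [Fin.ext_iff] using hij
    have : (i : ℕ) % d = (j : ℕ) % d := Nat.ModEq.add_right_cancel' t h
    rw [Nat.mod_eq_of_lt i.isLt, Nat.mod_eq_of_lt j.isLt] at this
    exact Fin.ext this
  · intro i; rfl

lemma patch_dot {d : ℕ} (hd : 0 < d) (q : ℕ) (z x : Fin d → ℝ) :
    ∑ i : Fin d, ∑ j : Fin d, (patch hd q z i) ⬝ᵥ (patch hd q x j)
      = (q : ℝ) * (∑ i, z i) * (∑ i, x i) := by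
  simp only [dotProduct, patch]
  conv_lhs => enter [2]; ext i; rw [Finset.sum_comm]
  rw [Finset.sum_comm]
  simp_rw [← Finset.mul_sum, ← Finset.sum_mul, sum_shift hd]
  rw [Finset.sum_const, Finset.card_univ, Fintype.card_fin, nsmul_eq_mul]
  ring

lemma cntk_sub {d : ℕ} (hd : 0 < d) (q : ℕ) (z x : Fin d → ℝ) :
    cntk hd q z x - cntk hd q z (-x)
      = (2 * q / (d : ℝ) ^ 2) * (z ⬝ᵥ (fun _ => 1)) * (x ⬝ᵥ (fun _ => 1)) := by
  have h1 : z ⬝ᵥ (fun _ => (1:ℝ)) = ∑ i, z i := by simp [dotProduct]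
  have h2 : x ⬝ᵥ (fun _ => (1:ℝ)) = ∑ i, x i := by simp [dotProduct]
  rw [h1, h2, cntk, cntk, ← mul_sub, ← Finset.sum_sub_distrib]
  simp_rw [← Finset.sum_sub_distrib, patch_neg, ntk_sub, ← Finset.mul_sum]
  rw [patch_dot hd]
  ring

lemma cntk_comm {d : ℕ} (hd : 0 < d) (q : ℕ) (z x : Fin d → ℝ) :
    cntk hd q z x = cntk hd q x z := by
  rw [cntk, cntk, Finset.sum_comm]
  simp_rw [ntk_comm]

lemma cntk_neg_neg {d : ℕ} (hd : 0 < d) (q : ℕ) (z x : Fin d → ℝ) :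
    cntk hd q (-z) (-x) = cntk hd q z x := by
  rw [cntk, cntk]
  simp_rw [patch_neg, ntk_neg_neg]

lemma Hcntk_eq {d : ℕ} (hd : 0 < d) (q : ℕ) (x : Fin d → ℝ) :
    Hcntk hd q x = !![cntk hd q x x, cntk hd q x (-x);
                      cntk hd q x (-x), cntk hd q x x] := by
  rw [Hcntk, cntk_comm hd q (-x) x, cntk_neg_neg]

lemma gK_eq {d : ℕ} (hd : 0 < d) (q : ℕ) (x z : Fin d → ℝ) :
    gK hd q x z = (cntk hd q x x ^ 2 - cntk hd q x (-x) ^ 2)⁻¹ *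
      ((cntk hd q z x - cntk hd q z (-x)) * (cntk hd q x x + cntk hd q x (-x))) := by
  rw [gK, Matrix.inv_def, Hcntk_eq, Matrix.adjugate_fin_two_of, Matrix.det_fin_two_of,
    Ring.inverse_eq_inv']
  simp [Matrix.vecMul, dotProduct, Fin.sum_univ_two]
  rw [show cntk hd q x x * cntk hd q x x - cntk hd q x (-x) * cntk hd q x (-x)
      = cntk hd q x x ^ 2 - cntk hd q x (-x) ^ 2 by ring]
  ring

/-- For CNTK-GAP regression on `{(x,+1), (−x,−1)}` with `x · 1_d ≠ 0` and invertible
kernel matrix: if `x · 1_d > 0` then `g_K(z) ≥ 0` iff `z · 1_d ≥ 0`, and if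
`x · 1_d < 0` then `g_K(z) ≥ 0` iff `z · 1_d ≤ 0`; so `z · 1_d = 0` is the
decision boundary. -/
theorem cntk_decision_boundary {d : ℕ} (hd : 0 < d) (q : ℕ) (x : Fin d → ℝ)
    (hx : x ⬝ᵥ (fun _ => 1) ≠ 0) (hinv : (Hcntk hd q x).det ≠ 0) :
    ∀ z : Fin d → ℝ,
      (0 < x ⬝ᵥ (fun _ => 1) → (0 ≤ gK hd q x z ↔ 0 ≤ z ⬝ᵥ (fun _ => 1))) ∧
      (x ⬝ᵥ (fun _ => 1) < 0 → (0 ≤ gK hd q x z ↔ z ⬝ᵥ (fun _ => 1) ≤ 0)) := by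
  intro z
  set a := cntk hd q x x with ha
  set b := cntk hd q x (-x) with hb
  set k := 2 * (q : ℝ) / (d : ℝ) ^ 2 with hk
  set xs := x ⬝ᵥ (fun _ => (1:ℝ)) with hxs
  set zs := z ⬝ᵥ (fun _ => (1:ℝ)) with hzs
  have hk0 : 0 ≤ k := by positivity
  have hdet : (Hcntk hd q x).det = a ^ 2 - b ^ 2 := by
    rw [Hcntk_eq, Matrix.det_fin_two_of]; ring
  have hab : a - b = k * xs * xs := cntk_sub hd q x x
  have habne : a - b ≠ 0 := by
    intro h
    apply hinv
    rw [hdet, show a ^ 2 - b ^ 2 = (a - b) * (a + b) by ring, h, zero_mul]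
  have habpos : 0 < a - b := by
    rcases lt_or_eq_of_le (by nlinarith [mul_self_nonneg xs] : 0 ≤ a - b) with h | h
    · exact h
    · exact absurd h.symm habne
  have hkpos : 0 < k := by
    rcases lt_or_eq_of_le hk0 with h | h
    · exact h
    · exfalso; apply habne; rw [hab, ← h]; ring
  have habne2 : a + b ≠ 0 := by
    intro h
    apply hinv
    rw [hdet, show a ^ 2 - b ^ 2 = (a - b) * (a + b) by ring, h, mul_zero]
  have hu : cntk hd q z x - cntk hd q z (-x) = k * zs * xs := cntk_sub hd q z x
  have hgk : gK hd q x z = k * zs * xs / (a - b) := by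
    rw [gK_eq, hu, show a ^ 2 - b ^ 2 = (a - b) * (a + b) by ring, mul_inv, div_eq_mul_inv]
    rw [show (a - b)⁻¹ * (a + b)⁻¹ * (k * zs * xs * (a + b))
        = k * zs * xs * (a - b)⁻¹ * ((a + b)⁻¹ * (a + b)) by ring,
      inv_mul_cancel₀ habne2, mul_one]
  have hsq : 0 < xs * xs := by
    rcases hx.lt_or_gt with h | h <;> nlinarith
  constructor
  · intro hxp
    rw [hgk, le_div_iff₀ habpos, zero_mul]
    constructor
    · intro h; by_contra hzneg; push_neg at hzneg; nlinarith
    · intro h; exact mul_nonneg (mul_nonneg hkpos.le h) hxp.le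
  · intro hxn
    rw [hgk, le_div_iff₀ habpos, zero_mul]
    constructor
    · intro h; by_contra hzpos; push_neg at hzpos; nlinarith
    · intro h; nlinarith
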